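/- A forward metric space that is forward boundedly compact (every closed bounded forward ball is compact) is forward complete. -/

import Mathlib

open Set Filter Topology

variable {X : Type*}

/-- Forward ball of an (possibly asymmetric) distance function. -/
def fwdBall (d : X → X → ℝ) (x : X) (r : ℝ) : Set X := {y | d x y < r}

/-- Backward ball. -/
def bwdBall (d : X → X → ℝ) (x : X) (r : ℝ) : Set X := {y | d y x < r}

/-- The forward topology, generated by forward balls. -/
def fwdTop (d : X → X → ℝ) : TopologicalSpace X :=
  TopologicalSpace.generateFrom {s | ∃ x r, s = fwdBall d x r}

/-- The backward topology, generated by backward balls. -/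
def bwdTop (d : X → X → ℝ) : TopologicalSpace X :=
  TopologicalSpace.generateFrom {s | ∃ x r, s = bwdBall d x r}

/-- `d` is an irreversible metric: nonnegative, vanishing exactly on the diagonal, and
satisfying the triangle inequality (symmetry is not required). -/
def IsIrrevMetric (d : X → X → ℝ) : Prop :=
  (∀ x y, 0 ≤ d x y) ∧ (∀ x y, d x y = 0 ↔ x = y) ∧ ∀ x y z, d x z ≤ d x y + d y z

/-- `(X, star, d)` is a pointed forward `Θ`-metric space: `Θ` is nondecreasing with values ≥ 1
and the reversibility of the closure (in the forward topology) of each forward ball of radius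
`r > 0` about `star` is bounded by `Θ r`. -/
def PointedForwardTheta (d : X → X → ℝ) (star : X) (Θ : ℝ → ℝ) : Prop :=
  Monotone Θ ∧ (∀ r, 1 ≤ Θ r) ∧
  ∀ r > 0, ∀ x ∈ @closure X (fwdTop d) (fwdBall d star r),
    ∀ y ∈ @closure X (fwdTop d) (fwdBall d star r), d x y ≤ Θ r * d y x

/-- A forward Cauchy sequence. -/
def FwdCauchy (d : X → X → ℝ) (u : ℕ → X) : Prop :=
  ∀ ε > (0:ℝ), ∃ N : ℕ, ∀ i j : ℕ, N < i → i ≤ j → d (u i) (u j) < ε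

/-- A backward Cauchy sequence. -/
def BwdCauchy (d : X → X → ℝ) (u : ℕ → X) : Prop :=
  ∀ ε > (0:ℝ), ∃ N : ℕ, ∀ i j : ℕ, N < i → i ≤ j → d (u j) (u i) < ε

/-- Forward completeness: every forward Cauchy sequence converges in the forward topology. -/
def FwdComplete (d : X → X → ℝ) : Prop :=
  ∀ u : ℕ → X, FwdCauchy d u → ∃ x : X, Tendsto u atTop (@nhds X (fwdTop d) x)

/-- Backward completeness: every backward Cauchy sequence converges in the forward topology. -/
def BwdComplete (d : X → X → ℝ) : Prop :=
  ∀ u : ℕ → X, BwdCauchy d u → ∃ x : X, Tendsto u atTop (@nhds X (fwdTop d) x)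

/-
A forward Cauchy sequence eventually stays in a forward ball `B⁺_c(1)`, whose closure is compact,
so it has a cluster point `x`. Cauchy-ness then upgrades the cluster point to a limit: once
`d(u_i, u_j) < ε/2` for `j ≥ i > N` and some such `u_i` lies in `B⁺_x(ε/2)`, the triangle
inequality `d(x, u_j) ≤ d(x, u_i) + d(u_i, u_j)` puts the whole tail in `B⁺_x(ε)`.
-/

section ForwardTopology

lemma isOpen_fwdBall (d : X → X → ℝ) (x : X) (r : ℝ) : @IsOpen X (fwdTop d) (fwdBall d x r) :=
  TopologicalSpace.GenerateOpen.basic _ ⟨x, r, rfl⟩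

variable {d : X → X → ℝ}

lemma exists_fwdBall_subset_of_isOpen (htri : ∀ x y z, d x z ≤ d x y + d y z) {U : Set X}
    (hU : @IsOpen X (fwdTop d) U) {x : X} (hx : x ∈ U) : ∃ ε > 0, fwdBall d x ε ⊆ U := by
  induction hU generalizing x with
  | basic s hs =>
    obtain ⟨z, r, rfl⟩ := hs
    refine ⟨r - d z x, sub_pos.2 hx, fun y hy => ?_⟩
    have hy : d x y < r - d z x := hy
    show d z y < r
    linarith [htri z x y]
  | univ => exact ⟨1, one_pos, subset_univ _⟩
  | inter s t _ _ ihs iht =>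
    obtain ⟨ε₁, hε₁, hs⟩ := ihs hx.1
    obtain ⟨ε₂, hε₂, ht⟩ := iht hx.2
    refine ⟨min ε₁ ε₂, lt_min hε₁ hε₂, fun y (hy : d x y < min ε₁ ε₂) => ⟨hs ?_, ht ?_⟩⟩
    · exact hy.trans_le (min_le_left _ _)
    · exact hy.trans_le (min_le_right _ _)
  | sUnion S _ ih =>
    obtain ⟨s, hs, hxs⟩ := hx
    obtain ⟨ε, hε, hsub⟩ := ih s hs hxs
    exact ⟨ε, hε, hsub.trans (subset_sUnion_of_mem hs)⟩

lemma hasBasis_nhds_fwdBall (htri : ∀ x y z, d x z ≤ d x y + d y z) (hself : ∀ x, d x x = 0)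
    (x : X) : (@nhds X (fwdTop d) x).HasBasis (fun ε => 0 < ε) (fwdBall d x) := by
  let _ : TopologicalSpace X := fwdTop d
  refine ⟨fun t => ⟨fun ht => ?_, fun ⟨ε, hε, hsub⟩ => ?_⟩⟩
  · obtain ⟨U, hUt, hU, hxU⟩ := mem_nhds_iff.1 ht
    obtain ⟨ε, hε, hsub⟩ := exists_fwdBall_subset_of_isOpen htri hU hxU
    exact ⟨ε, hε, hsub.trans hUt⟩
  · have hx : x ∈ fwdBall d x ε := show d x x < ε by rwa [hself]
    exact mem_of_superset ((isOpen_fwdBall d x ε).mem_nhds hx) hsub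

lemma FwdCauchy.tendsto_of_mapClusterPt (htri : ∀ x y z, d x z ≤ d x y + d y z)
    (hself : ∀ x, d x x = 0) {u : ℕ → X} (hu : FwdCauchy d u) {x : X}
    (hx : @MapClusterPt X (fwdTop d) ℕ x atTop u) : Tendsto u atTop (@nhds X (fwdTop d) x) := by
  let _ : TopologicalSpace X := fwdTop d
  have hbasis := hasBasis_nhds_fwdBall htri hself x
  rw [hbasis.tendsto_right_iff]
  intro ε hε
  obtain ⟨N, hN⟩ := hu (ε / 2) (half_pos hε)
  have hfreq := (hbasis.mapClusterPt_iff_frequently.1 hx) (ε / 2) (half_pos hε)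
  obtain ⟨i, hiN, hi⟩ := frequently_atTop.1 hfreq (N + 1)
  refine eventually_atTop.2 ⟨i, fun j hij => ?_⟩
  have hi : d x (u i) < ε / 2 := hi
  have hij : d (u i) (u j) < ε / 2 := hN i j (by omega) hij
  show d x (u j) < ε
  linarith [htri x (u i) (u j)]

lemma FwdCauchy.eventually_mem_fwdBall {u : ℕ → X} (hu : FwdCauchy d u) :
    ∃ c, ∀ᶠ n in atTop, u n ∈ fwdBall d c 1 := by
  obtain ⟨N, hN⟩ := hu 1 one_pos
  exact ⟨u (N + 1), eventually_atTop.2 ⟨N + 1, fun n hn => hN (N + 1) n (by omega) hn⟩⟩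

end ForwardTopology

theorem stmt3_general (d : X → X → ℝ) (hd : IsIrrevMetric d)
    (hbc : ∀ (x : X) (r : ℝ), @IsCompact X (fwdTop d) (@closure X (fwdTop d) (fwdBall d x r))) :
    FwdComplete d := by
  obtain ⟨_, hzero, htri⟩ := hd
  intro u hu
  let _ : TopologicalSpace X := fwdTop d
  obtain ⟨c, hc⟩ := hu.eventually_mem_fwdBall
  obtain ⟨x, -, hx⟩ := (hbc c 1).exists_mapClusterPt_of_frequently
    (hc.mono fun _ hn => subset_closure hn).frequently
  exact ⟨x, hu.tendsto_of_mapClusterPt htri (fun x => (hzero x x).2 rfl) hx⟩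

/-- A forward metric space that is forward boundedly compact (every closed
forward ball is compact in the forward topology) is forward complete. -/
theorem stmt3 (d : X → X → ℝ) (hd : IsIrrevMetric d) (star : X) (Θ : ℝ → ℝ)
    (hΘ : PointedForwardTheta d star Θ)
    (hbc : ∀ (x : X) (r : ℝ), @IsCompact X (fwdTop d) (@closure X (fwdTop d) (fwdBall d x r))) :
    FwdComplete d :=
  stmt3_general d hd hbc
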